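/- Nash implementation of the centralized optimum (Theorem 1(b) / Claim 4): if m* is a Nash equilibrium of the game induced by the mechanism and the users' payoffs, then the equilibrium allocation is an optimal solution of the centralized problem (P_C): â_i(m*) ∈ A_i for all i ∈ N, Σ_{i∈N} t̂_i(m*) = 0, and for every feasible action profile a, Σ_{i∈N} u_i((a_j)_{j∈R_i}) ≤ Σ_{i∈N} u_i((â_j(m*))_{j∈R_i}). -/

import Mathlib

open Finset

/-- The set `C_j` of users affected by `j`: those `k` with `j ∈ R k`. -/
def affected {N : Type*} [Fintype N] [DecidableEq N] (R : N → Finset N) (j : N) : Finset N :=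
  Finset.univ.filter (fun k => j ∈ R k)

/-- The action `â_j(m)` assigned to user `j` by the mechanism. -/
noncomputable def ahat {N : Type*} [Fintype N] [DecidableEq N] (R : N → Finset N)
    (a : N → N → ℝ) (j : N) : ℝ :=
  (∑ k ∈ affected R j, a k j) / ((affected R j).card : ℝ)

/-- The personalized price `l_{ij}(m)` of user `i` for the action of `j`. -/
def price {N : Type*} (σ : N → N → N) (π : N → N → ℝ) (i j : N) : ℝ :=
  π (σ j i) j - π (σ j (σ j i)) j

/-- The tax `t̂_i(m)` of user `i`. -/
noncomputable def tax {N : Type*} [Fintype N] [DecidableEq N] (R : N → Finset N)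
    (σ : N → N → N) (a π : N → N → ℝ) (i : N) : ℝ :=
  ∑ j ∈ R i,
    (price σ π i j * ahat R a j
      + π i j * (a i j - a (σ j i) j) ^ 2
      - π (σ j i) j * (a (σ j i) j - a (σ j (σ j i)) j) ^ 2)

open Classical in
/-- User `i`'s payoff (valued in `EReal`) at the message profile `(a, π)`. -/
noncomputable def payoff {N : Type*} [Fintype N] [DecidableEq N] (R : N → Finset N)
    (σ : N → N → N) (A : N → Set ℝ) (u : ∀ i : N, (↥(R i) → ℝ) → ℝ)
    (a π : N → N → ℝ) (i : N) : EReal :=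
  if ahat R a i ∈ A i then
    (((- tax R σ a π i + u i fun j => ahat R a j.1) : ℝ) : EReal)
  else ⊥

/-- `(a, π)` is a Nash equilibrium of the game induced by the mechanism and the payoffs. -/
def IsNE {N : Type*} [Fintype N] [DecidableEq N] (R : N → Finset N)
    (σ : N → N → N) (A : N → Set ℝ) (u : ∀ i : N, (↥(R i) → ℝ) → ℝ)
    (a π : N → N → ℝ) : Prop :=
  (∀ i, ∀ j ∈ R i, 0 ≤ π i j) ∧
  ∀ (i : N) (a' π' : N → ℝ), (∀ j ∈ R i, 0 ≤ π' j) →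
    payoff R σ A u (Function.update a i a') (Function.update π i π') i ≤
      payoff R σ A u a π i

/-! Budget balance holds for every message profile: regrouping the taxes by the affecting user
`j`, the prices `l_{kj}` and the penalty terms telescope along the cycle `σ j` of `C_j`.
For optimality, user `i` can make the mechanism announce any actions `x` on `R i` by proposing
suitable actions and zero prices; since `|C_j| ≥ 3`, neither `σ j i` nor `σ j (σ j i)` is `i`,
so this deviation leaves `i`'s prices unchanged and removes only its own nonnegative penalty.
The equilibrium condition then gives `u i x ≤ u i (â(m*)) + Σ_{j ∈ R i} l_{ij} (x j - â_j(m*))`,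
and summing over `i` the price terms cancel. -/

section Cycles

variable {α : Type*} {f : α → α} {s : Finset α}

theorem apply_apply_ne_of_three_le_card (hs : 3 ≤ s.card)
    (hcyc : ∀ x ∈ s, ∀ y ∈ s, ∃ n : ℕ, f^[n] x = y) {x : α} (hx : x ∈ s) : f (f x) ≠ x := by
  classical
  intro h2
  have hper : Function.IsPeriodicPt f 2 x := h2
  have hsub : s ⊆ {x, f x} := by
    intro y hy
    obtain ⟨n, rfl⟩ := hcyc x hx y hy
    rw [← hper.iterate_mod_apply]
    rcases Nat.mod_two_eq_zero_or_one n with h | h <;> simp [h]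
  have := (card_le_card hsub).trans (card_insert_le x {f x})
  simp only [card_singleton] at this
  omega

theorem apply_ne_of_three_le_card (hs : 3 ≤ s.card)
    (hcyc : ∀ x ∈ s, ∀ y ∈ s, ∃ n : ℕ, f^[n] x = y) {x : α} (hx : x ∈ s) : f x ≠ x :=
  fun h1 => apply_apply_ne_of_three_le_card hs hcyc hx (by rw [h1, h1])

theorem sum_sub_comp_eq_zero_of_bijOn {G : Type*} [AddCommGroup G] (hf : Set.BijOn f s s)
    (g : α → G) :
    ∑ x ∈ s, (g x - g (f x)) = 0 := by
  rw [sum_sub_distrib, sub_eq_zero, eq_comm]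
  exact sum_nbij f (fun x hx => hf.mapsTo hx) hf.injOn hf.surjOn (fun _ _ => rfl)

end Cycles

section Mechanism

variable {N : Type*} [Fintype N] [DecidableEq N] {R : N → Finset N}

@[simp]
theorem mem_affected {j k : N} : k ∈ affected R j ↔ j ∈ R k := by
  simp [affected]

theorem sum_sum_eq_sum_sum_affected {M : Type*} [AddCommMonoid M] (F : N → N → M) :
    ∑ i, ∑ j ∈ R i, F i j = ∑ j, ∑ i ∈ affected R j, F i j :=
  sum_comm' fun i j => by simp

variable {σ : N → N → N}

theorem sum_sum_price_mul_eq_zero (hσ : ∀ j, Set.BijOn (σ j) ↑(affected R j) ↑(affected R j))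
    (π : N → N → ℝ) (y : N → ℝ) : ∑ i, ∑ j ∈ R i, price σ π i j * y j = 0 := by
  rw [sum_sum_eq_sum_sum_affected]
  refine sum_eq_zero fun j _ => ?_
  rw [← sum_mul]
  unfold price
  rw [sum_sub_comp_eq_zero_of_bijOn (hσ j) (fun k => π (σ j k) j), zero_mul]

theorem sum_tax_eq_zero (hσ : ∀ j, Set.BijOn (σ j) ↑(affected R j) ↑(affected R j))
    (a π : N → N → ℝ) : ∑ i, tax R σ a π i = 0 := by
  have hpenalty : ∑ i, ∑ j ∈ R i, (π i j * (a i j - a (σ j i) j) ^ 2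
      - π (σ j i) j * (a (σ j i) j - a (σ j (σ j i)) j) ^ 2) = 0 := by
    rw [sum_sum_eq_sum_sum_affected]
    exact sum_eq_zero fun j _ =>
      sum_sub_comp_eq_zero_of_bijOn (hσ j) (fun k => π k j * (a k j - a (σ j k) j) ^ 2)
  calc ∑ i, tax R σ a π i
      = ∑ i, ∑ j ∈ R i, price σ π i j * ahat R a j
        + ∑ i, ∑ j ∈ R i, (π i j * (a i j - a (σ j i) j) ^ 2
          - π (σ j i) j * (a (σ j i) j - a (σ j (σ j i)) j) ^ 2) := by
        simp only [tax, ← sum_add_distrib, add_sub_assoc]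
    _ = 0 := by rw [sum_sum_price_mul_eq_zero hσ, hpenalty, add_zero]

noncomputable def steeringProposal (R : N → Finset N) (a : N → N → ℝ) (i : N) (x : N → ℝ) :
    N → ℝ :=
  fun j => (affected R j).card * x j - ∑ k ∈ (affected R j).erase i, a k j

theorem ahat_update_steeringProposal (a : N → N → ℝ) {i j : N} (x : N → ℝ) (hj : j ∈ R i) :
    ahat R (Function.update a i (steeringProposal R a i x)) j = x j := by
  have hi : i ∈ affected R j := mem_affected.2 hj
  have hcard : ((affected R j).card : ℝ) ≠ 0 := Nat.cast_ne_zero.2 (card_ne_zero_of_mem hi)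
  have hothers : ∑ k ∈ (affected R j).erase i, Function.update a i (steeringProposal R a i x) k j
      = ∑ k ∈ (affected R j).erase i, a k j :=
    sum_congr rfl fun k hk => by rw [Function.update_of_ne (ne_of_mem_erase hk)]
  rw [ahat, ← add_sum_erase _ _ hi, Function.update_self, hothers, div_eq_iff hcard,
    steeringProposal]
  ring

theorem tax_update_steeringProposal_le (a π : N → N → ℝ) {i : N} (x : N → ℝ)
    (hπ : ∀ j ∈ R i, 0 ≤ π i j) (hσ₁ : ∀ j ∈ R i, σ j i ≠ i)
    (hσ₂ : ∀ j ∈ R i, σ j (σ j i) ≠ i) :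
    tax R σ (Function.update a i (steeringProposal R a i x)) (Function.update π i 0) i ≤
      tax R σ a π i + ∑ j ∈ R i, price σ π i j * (x j - ahat R a j) := by
  rw [tax, tax, ← sum_add_distrib]
  refine sum_le_sum fun j hj => ?_
  simp only [ahat_update_steeringProposal a x hj, price, Function.update_self,
    Function.update_of_ne (hσ₁ j hj), Function.update_of_ne (hσ₂ j hj), Pi.zero_apply]
  nlinarith [mul_nonneg (hπ j hj) (sq_nonneg (a i j - a (σ j i) j))]

variable {A : N → Set ℝ} {u : ∀ i : N, (↥(R i) → ℝ) → ℝ} {a π : N → N → ℝ}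

theorem payoff_of_mem {i : N} (h : ahat R a i ∈ A i) :
    payoff R σ A u a π i = ((- tax R σ a π i + u i fun j => ahat R a j.1 : ℝ) : EReal) :=
  if_pos h

theorem IsNE.ahat_mem (hNE : IsNE R σ A u a π) {i : N} (hi : i ∈ R i) (hA : (A i).Nonempty) :
    ahat R a i ∈ A i := by
  obtain ⟨x₀, hx₀⟩ := hA
  have hdev := hNE.2 i (steeringProposal R a i fun _ => x₀) 0 fun _ _ => le_rfl
  rw [payoff_of_mem (by rwa [ahat_update_steeringProposal a _ hi])] at hdev
  by_contra h
  rw [payoff, if_neg h] at hdev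
  exact (EReal.bot_lt_coe _).not_ge hdev

theorem IsNE.utility_le (hNE : IsNE R σ A u a π) {i : N} (hi : i ∈ R i)
    (hσ₁ : ∀ j ∈ R i, σ j i ≠ i) (hσ₂ : ∀ j ∈ R i, σ j (σ j i) ≠ i)
    {x : N → ℝ} (hx : x i ∈ A i) :
    u i (fun j => x j.1) ≤
      ∑ j ∈ R i, price σ π i j * (x j - ahat R a j) + u i (fun j => ahat R a j.1) := by
  have hdev := hNE.2 i (steeringProposal R a i x) 0 fun _ _ => le_rfl
  have hfun : (fun j : ↥(R i) => ahat R (Function.update a i (steeringProposal R a i x)) j.1)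
      = fun j => x j.1 := funext fun j => ahat_update_steeringProposal a x j.2
  rw [payoff_of_mem (by rwa [ahat_update_steeringProposal a x hi]), hfun,
    payoff_of_mem (hNE.ahat_mem hi ⟨_, hx⟩), EReal.coe_le_coe_iff] at hdev
  linarith [tax_update_steeringProposal_le a π x (hNE.1 i) hσ₁ hσ₂]

end Mechanism

theorem NE_implements_optimum_general
    {N : Type*} [Fintype N] [DecidableEq N]
    (R : N → Finset N) (σ : N → N → N)
    (hR : ∀ i, i ∈ R i)
    (hC3 : ∀ j, 3 ≤ (affected R j).card)
    (hσ : ∀ j, Set.BijOn (σ j) ↑(affected R j) ↑(affected R j))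
    (hcyc : ∀ j, ∀ x ∈ affected R j, ∀ y ∈ affected R j, ∃ n : ℕ, (σ j)^[n] x = y)
    (A : N → Set ℝ)
    (hA0 : ∀ i, (0 : ℝ) ∈ A i)
    (u : ∀ i : N, (↥(R i) → ℝ) → ℝ)
    (a π : N → N → ℝ)
    (hNE : IsNE R σ A u a π) :
    (∀ i, ahat R a i ∈ A i) ∧
    (∑ i, tax R σ a π i = 0) ∧
    ∀ b : N → ℝ, (∀ i, b i ∈ A i) →
      ∑ i, u i (fun j => b j.1) ≤ ∑ i, u i (fun j => ahat R a j.1) := by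
  refine ⟨fun i => hNE.ahat_mem (hR i) ⟨0, hA0 i⟩, sum_tax_eq_zero hσ a π, fun b hb => ?_⟩
  have hσ₁ : ∀ i, ∀ j ∈ R i, σ j i ≠ i := fun i j hj =>
    apply_ne_of_three_le_card (hC3 j) (hcyc j) (mem_affected.2 hj)
  have hσ₂ : ∀ i, ∀ j ∈ R i, σ j (σ j i) ≠ i := fun i j hj =>
    apply_apply_ne_of_three_le_card (hC3 j) (hcyc j) (mem_affected.2 hj)
  calc ∑ i, u i (fun j => b j.1)
      ≤ ∑ i, (∑ j ∈ R i, price σ π i j * (b j - ahat R a j) + u i (fun j => ahat R a j.1)) :=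
        sum_le_sum fun i _ => hNE.utility_le (hR i) (hσ₁ i) (hσ₂ i) (hb i)
    _ = ∑ i, u i (fun j => ahat R a j.1) := by
        rw [sum_add_distrib, sum_sum_price_mul_eq_zero hσ, zero_add]

/-- Nash implementation of the centralized optimum (Theorem 1(b) / Claim 4). -/
theorem NE_implements_optimum
    {N : Type*} [Fintype N] [DecidableEq N]
    (R : N → Finset N) (σ : N → N → N)
    (hR : ∀ i, i ∈ R i)
    (hC3 : ∀ j, 3 ≤ (affected R j).card)
    (hσ : ∀ j, Set.BijOn (σ j) ↑(affected R j) ↑(affected R j))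
    (hcyc : ∀ j, ∀ x ∈ affected R j, ∀ y ∈ affected R j, ∃ n : ℕ, (σ j)^[n] x = y)
    (A : N → Set ℝ)
    (hA0 : ∀ i, (0 : ℝ) ∈ A i) (hAconv : ∀ i, Convex ℝ (A i)) (hAcomp : ∀ i, IsCompact (A i))
    (u : ∀ i : N, (↥(R i) → ℝ) → ℝ)
    (hu : ∀ i, ConcaveOn ℝ Set.univ (u i))
    (a π : N → N → ℝ)
    (hNE : IsNE R σ A u a π) :
    (∀ i, ahat R a i ∈ A i) ∧
    (∑ i, tax R σ a π i = 0) ∧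
    ∀ b : N → ℝ, (∀ i, b i ∈ A i) →
      ∑ i, u i (fun j => b j.1) ≤ ∑ i, u i (fun j => ahat R a j.1) :=
  NE_implements_optimum_general R σ hR hC3 hσ hcyc A hA0 u a π hNE
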